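/- Let ε ∈ [0,1), let A ∈ ℝ^{d×n} have full column rank (A is injective as a linear map), and let S : ℝ^d → ℝ^k be a linear map that is an ε-subspace embedding for the range of A. Then for every x ∈ ℝ^n, √(1−ε)·‖Ax‖₂ ≤ ‖SAx‖₂ ≤ √(1+ε)·‖Ax‖₂; consequently SA has full column rank and (sup_{‖x‖₂=1} ‖SAx‖₂)/(inf_{‖x‖₂=1} ‖SAx‖₂) ≤ √((1+ε)/(1−ε)) · (sup_{‖x‖₂=1} ‖Ax‖₂)/(inf_{‖x‖₂=1} ‖Ax‖₂), i.e., κ(SA) ≤ √((1+ε)/(1−ε))·κ(A). -/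

import Mathlib

open RealInnerProductSpace

/-- The image of `A.mulVec x`, viewed as a vector of `EuclideanSpace ℝ (Fin d)`. -/
noncomputable def mulVecEuc {d n : ℕ} (A : Matrix (Fin d) (Fin n) ℝ)
    (x : EuclideanSpace ℝ (Fin n)) : EuclideanSpace ℝ (Fin d) :=
  (WithLp.equiv 2 (Fin d → ℝ)).symm (A.mulVec (WithLp.equiv 2 (Fin n → ℝ) x))

/-!
Taking `x = y` in the embedding inequality gives `|‖Ax‖² - ‖SAx‖²| ≤ ε‖Ax‖²`, hence the two-sided
norm bounds; the lower one forces `SA` to be injective because `A` is. Over the unit sphere the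
bounds give `sup ‖SAx‖ ≤ √(1+ε) sup ‖Ax‖` and `inf ‖SAx‖ ≥ √(1-ε) inf ‖Ax‖`, which yields the
bound on the ratio; when `inf ‖Ax‖ = 0` both ratios are `0` by the convention `x / 0 = 0`.
-/

theorem norm_bounds_of_abs_inner_self_sub_le {E F : Type*}
    [NormedAddCommGroup E] [InnerProductSpace ℝ E] [NormedAddCommGroup F] [InnerProductSpace ℝ F]
    {ε : ℝ} {v : E} {w : F} (h : |⟪v, v⟫ - ⟪w, w⟫| ≤ ε * ‖v‖ * ‖v‖) :
    Real.sqrt (1 - ε) * ‖v‖ ≤ ‖w‖ ∧ ‖w‖ ≤ Real.sqrt (1 + ε) * ‖v‖ := by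
  rw [real_inner_self_eq_norm_sq, real_inner_self_eq_norm_sq] at h
  obtain ⟨hlo, hhi⟩ := abs_le.mp h
  have sqrt_mul_norm : ∀ c, Real.sqrt c * ‖v‖ = Real.sqrt (c * ‖v‖ ^ 2) := fun c => by
    rw [Real.sqrt_mul' _ (sq_nonneg _), Real.sqrt_sq (norm_nonneg _)]
  constructor
  · calc Real.sqrt (1 - ε) * ‖v‖ = Real.sqrt ((1 - ε) * ‖v‖ ^ 2) := sqrt_mul_norm _
      _ ≤ Real.sqrt (‖w‖ ^ 2) := Real.sqrt_le_sqrt (by linarith)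
      _ = ‖w‖ := Real.sqrt_sq (norm_nonneg _)
  · calc ‖w‖ = Real.sqrt (‖w‖ ^ 2) := (Real.sqrt_sq (norm_nonneg _)).symm
      _ ≤ Real.sqrt ((1 + ε) * ‖v‖ ^ 2) := Real.sqrt_le_sqrt (by linarith)
      _ = Real.sqrt (1 + ε) * ‖v‖ := (sqrt_mul_norm _).symm

theorem LinearMap.injective_comp_of_mul_norm_le {E F G : Type*}
    [NormedAddCommGroup E] [NormedSpace ℝ E] [NormedAddCommGroup F] [NormedSpace ℝ F]
    [NormedAddCommGroup G] [NormedSpace ℝ G] {T : E →ₗ[ℝ] F} {S : F →ₗ[ℝ] G}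
    (hT : Function.Injective T) {c : ℝ} (hc : 0 < c) (h : ∀ x, c * ‖T x‖ ≤ ‖S (T x)‖) :
    Function.Injective (S ∘ₗ T) := by
  refine (injective_iff_map_eq_zero _).2 fun x hx => hT ?_
  have hTx : c * ‖T x‖ ≤ 0 :=
    (h x).trans_eq (by rw [← LinearMap.comp_apply, hx, norm_zero])
  rw [map_zero, ← norm_le_zero_iff]
  exact nonpos_of_mul_nonpos_right hTx hc

theorem iSup_div_iInf_le_of_mul_le_of_le_mul {ι : Type*} {F G : ι → ℝ} {a b : ℝ}
    (ha : 0 < a) (hb : 0 ≤ b) (hG0 : ∀ i, 0 ≤ G i) (hGb : BddAbove (Set.range G))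
    (hlo : ∀ i, a * G i ≤ F i) (hhi : ∀ i, F i ≤ b * G i) :
    (⨆ i, F i) / (⨅ i, F i) ≤ b / a * ((⨆ i, G i) / (⨅ i, G i)) := by
  have hF0 : ∀ i, 0 ≤ F i := fun i => (mul_nonneg ha.le (hG0 i)).trans (hlo i)
  have hF_bdd : BddBelow (Set.range F) := ⟨0, by rintro _ ⟨i, rfl⟩; exact hF0 i⟩
  have hbG_bdd : BddAbove (Set.range fun i => b * G i) := by
    obtain ⟨C, hC⟩ := hGb
    exact ⟨b * C, by rintro _ ⟨i, rfl⟩; exact mul_le_mul_of_nonneg_left (hC ⟨i, rfl⟩) hb⟩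
  have haG_bdd : BddBelow (Set.range fun i => a * G i) :=
    ⟨0, by rintro _ ⟨i, rfl⟩; exact mul_nonneg ha.le (hG0 i)⟩
  have hsup : ⨆ i, F i ≤ b * ⨆ i, G i := by
    rw [Real.mul_iSup_of_nonneg hb]; exact ciSup_mono hbG_bdd hhi
  have hinf_lo : a * ⨅ i, G i ≤ ⨅ i, F i := by
    rw [Real.mul_iInf_of_nonneg ha.le]; exact ciInf_mono haG_bdd hlo
  have hinf_hi : ⨅ i, F i ≤ b * ⨅ i, G i := by
    rw [Real.mul_iInf_of_nonneg hb]; exact ciInf_mono hF_bdd hhi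
  rcases (Real.iInf_nonneg hG0).eq_or_lt with hG_inf | hG_inf
  · have hF_inf : ⨅ i, F i = 0 :=
      le_antisymm (by simpa [← hG_inf] using hinf_hi) (Real.iInf_nonneg hF0)
    simp [← hG_inf, hF_inf]
  · have hG_sup : 0 ≤ ⨆ i, G i := Real.iSup_nonneg hG0
    calc (⨆ i, F i) / (⨅ i, F i) ≤ (b * ⨆ i, G i) / (a * ⨅ i, G i) :=
          div_le_div₀ (by positivity) hsup (by positivity) hinf_lo
      _ = b / a * ((⨆ i, G i) / (⨅ i, G i)) := mul_div_mul_comm _ _ _ _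

theorem LinearMap.bddAbove_range_norm_sphere {E F : Type*}
    [NormedAddCommGroup E] [NormedSpace ℝ E] [FiniteDimensional ℝ E]
    [NormedAddCommGroup F] [NormedSpace ℝ F] (T : E →ₗ[ℝ] F) :
    BddAbove (Set.range fun x : {x : E // ‖x‖ = 1} => ‖T x‖) :=
  ⟨‖LinearMap.toContinuousLinearMap T‖, by
    rintro _ ⟨x, rfl⟩
    simpa [x.2] using (LinearMap.toContinuousLinearMap T).le_opNorm x.1⟩

theorem countsketch_stmt7_general {d n k : ℕ} (ε : ℝ) (hε1 : ε < 1)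
    (A : Matrix (Fin d) (Fin n) ℝ)
    (hA : Function.Injective fun x : EuclideanSpace ℝ (Fin n) => mulVecEuc A x)
    (S : EuclideanSpace ℝ (Fin d) →ₗ[ℝ] EuclideanSpace ℝ (Fin k))
    (hS : ∀ x y : EuclideanSpace ℝ (Fin n),
      |⟪mulVecEuc A x, mulVecEuc A y⟫ - ⟪S (mulVecEuc A x), S (mulVecEuc A y)⟫| ≤
        ε * ‖mulVecEuc A x‖ * ‖mulVecEuc A y‖) :
    (∀ x : EuclideanSpace ℝ (Fin n),
      Real.sqrt (1 - ε) * ‖mulVecEuc A x‖ ≤ ‖S (mulVecEuc A x)‖ ∧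
      ‖S (mulVecEuc A x)‖ ≤ Real.sqrt (1 + ε) * ‖mulVecEuc A x‖) ∧
    Function.Injective (fun x : EuclideanSpace ℝ (Fin n) => S (mulVecEuc A x)) ∧
    (⨆ x : {x : EuclideanSpace ℝ (Fin n) // ‖x‖ = 1}, ‖S (mulVecEuc A x.1)‖) /
        (⨅ x : {x : EuclideanSpace ℝ (Fin n) // ‖x‖ = 1}, ‖S (mulVecEuc A x.1)‖) ≤
      Real.sqrt ((1 + ε) / (1 - ε)) *
        ((⨆ x : {x : EuclideanSpace ℝ (Fin n) // ‖x‖ = 1}, ‖mulVecEuc A x.1‖) /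
          (⨅ x : {x : EuclideanSpace ℝ (Fin n) // ‖x‖ = 1}, ‖mulVecEuc A x.1‖)) := by
  have hsub : (0 : ℝ) < 1 - ε := by linarith
  have hsqrt : 0 < Real.sqrt (1 - ε) := Real.sqrt_pos.mpr hsub
  have bounds := fun x => norm_bounds_of_abs_inner_self_sub_le (hS x x)
  refine ⟨bounds,
    LinearMap.injective_comp_of_mul_norm_le (T := Matrix.toEuclideanLin A) hA hsqrt
      fun x => (bounds x).1, ?_⟩
  rw [Real.sqrt_div' _ hsub.le]
  exact iSup_div_iInf_le_of_mul_le_of_le_mul hsqrt (Real.sqrt_nonneg _)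
    (fun _ => norm_nonneg _) (Matrix.toEuclideanLin A).bddAbove_range_norm_sphere
    (fun x => (bounds x.1).1) fun x => (bounds x.1).2

/-- If `A ∈ ℝ^{d×n}` has full column rank and `S` is an `ε`-subspace embedding (`ε ∈ [0,1)`)
for the range of `A`, then `√(1-ε)‖Ax‖ ≤ ‖SAx‖ ≤ √(1+ε)‖Ax‖` for all `x`; consequently `SA`
has full column rank and `κ(SA) ≤ √((1+ε)/(1-ε))·κ(A)`, where the condition number is
the ratio of the sup and the inf of the norm over the unit sphere. -/
theorem countsketch_stmt7 {d n k : ℕ} (ε : ℝ) (hε0 : 0 ≤ ε) (hε1 : ε < 1)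
    (A : Matrix (Fin d) (Fin n) ℝ)
    (hA : Function.Injective fun x : EuclideanSpace ℝ (Fin n) => mulVecEuc A x)
    (S : EuclideanSpace ℝ (Fin d) →ₗ[ℝ] EuclideanSpace ℝ (Fin k))
    (hS : ∀ x y : EuclideanSpace ℝ (Fin n),
      |⟪mulVecEuc A x, mulVecEuc A y⟫ - ⟪S (mulVecEuc A x), S (mulVecEuc A y)⟫| ≤
        ε * ‖mulVecEuc A x‖ * ‖mulVecEuc A y‖) :
    (∀ x : EuclideanSpace ℝ (Fin n),
      Real.sqrt (1 - ε) * ‖mulVecEuc A x‖ ≤ ‖S (mulVecEuc A x)‖ ∧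
      ‖S (mulVecEuc A x)‖ ≤ Real.sqrt (1 + ε) * ‖mulVecEuc A x‖) ∧
    Function.Injective (fun x : EuclideanSpace ℝ (Fin n) => S (mulVecEuc A x)) ∧
    (⨆ x : {x : EuclideanSpace ℝ (Fin n) // ‖x‖ = 1}, ‖S (mulVecEuc A x.1)‖) /
        (⨅ x : {x : EuclideanSpace ℝ (Fin n) // ‖x‖ = 1}, ‖S (mulVecEuc A x.1)‖) ≤
      Real.sqrt ((1 + ε) / (1 - ε)) *
        ((⨆ x : {x : EuclideanSpace ℝ (Fin n) // ‖x‖ = 1}, ‖mulVecEuc A x.1‖) /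
          (⨅ x : {x : EuclideanSpace ℝ (Fin n) // ‖x‖ = 1}, ‖mulVecEuc A x.1‖)) :=
  countsketch_stmt7_general ε hε1 A hA S hS
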